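/- arXiv:1907.11473 — 2 statements merged into one kernel-verified Lean document; each statement's English description precedes it below -/
import Mathlib

section
/- Let n, m ∈ ℕ*, A ∈ ℝ^{n×n}, B ∈ ℝ^{n×m}, K, C ∈ ℝ^{m×n}, ℓ > 0, let P ∈ ℝ^{n×n} be symmetric positive definite and D ∈ ℝ^{m×m} diagonal with positive diagonal entries, and assume M1 < 0 and M2 ≥ 0. Then there exists α > 0 such that for every z ∈ ℝⁿ with zᵀPz ≤ 1 one has 2·zᵀP(Az + B·sat_ℓ(Kz)) ≤ −α·|z|², where |z| is the Euclidean norm of z. -/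
open Matrix

/-- Componentwise saturation function with level `ℓ`. -/
noncomputable def satv {m : ℕ} (ℓ : ℝ) (v : Fin m → ℝ) : Fin m → ℝ :=
  fun k => if |v k| ≤ ℓ then v k else ℓ * v k / |v k|

/-- The block matrix `M1` from the paper. -/
def M1mat {n m : ℕ} (A : Matrix (Fin n) (Fin n) ℝ) (B : Matrix (Fin n) (Fin m) ℝ)
    (K C : Matrix (Fin m) (Fin n) ℝ) (P : Matrix (Fin n) (Fin n) ℝ)
    (D : Matrix (Fin m) (Fin m) ℝ) : Matrix (Fin n ⊕ Fin m) (Fin n ⊕ Fin m) ℝ :=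
  Matrix.fromBlocks ((A + B * K)ᵀ * P + P * (A + B * K)) (P * B - (D * C)ᵀ)
    (Bᵀ * P - D * C) ((-2 : ℝ) • D)

/-- The block matrix `M2` from the paper. -/
def M2mat {n m : ℕ} (K C : Matrix (Fin m) (Fin n) ℝ) (P : Matrix (Fin n) (Fin n) ℝ)
    (ℓ : ℝ) : Matrix (Fin n ⊕ Fin m) (Fin n ⊕ Fin m) ℝ :=
  Matrix.fromBlocks P (K - C)ᵀ (K - C) (ℓ ^ 2 • (1 : Matrix (Fin m) (Fin m) ℝ))

/-! With `φ = sat_ℓ(Kz) - Kz`, the quadratic form of `M1` at `(z, φ)` equals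
`2 zᵀP(Az + B sat_ℓ(Kz)) - 2 φᵀD(Cz + φ)`. On the ellipsoid `zᵀPz ≤ 1`, `M2 ≥ 0` forces
`|((K - C)z)_k| ≤ ℓ`, which puts every `φ_k` in the sector `φ_k (φ_k + (Cz)_k) ≤ 0`; so the
`D`-term is nonpositive, and `α` can be taken as the coercivity constant of `-M1`. -/

open scoped MatrixOrder

theorem Matrix.PosDef.exists_pos_mul_dotProduct_self_le {ι : Type*} [Fintype ι] [DecidableEq ι]
    {S : Matrix ι ι ℝ} (hS : S.PosDef) : ∃ ε > 0, ∀ x : ι → ℝ, ε * (x ⬝ᵥ x) ≤ x ⬝ᵥ S *ᵥ x := by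
  cases isEmpty_or_nonempty ι
  · exact ⟨1, one_pos, fun x => by simp [dotProduct]⟩
  obtain ⟨ε, hε, hεS⟩ : ∃ ε > 0, algebraMap ℝ (Matrix ι ι ℝ) ε ≤ S :=
    (CFC.exists_pos_algebraMap_le_iff hS.isHermitian).2 fun _ => hS.isStrictlyPositive.spectrum_pos
  refine ⟨ε, hε, fun x => ?_⟩
  simpa [Algebra.algebraMap_eq_smul_one, sub_mulVec, smul_mulVec, dotProduct_sub] using
    (le_iff.1 hεS).dotProduct_mulVec_nonneg x

theorem abs_mulVec_le_of_posSemidef_fromBlocks {ι κ : Type*} [Fintype ι] [Fintype κ]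
    [DecidableEq κ] {P : Matrix ι ι ℝ} {L : Matrix κ ι ℝ} {ℓ : ℝ} (hℓ : 0 ≤ ℓ)
    (h : (fromBlocks P Lᵀ L (ℓ ^ 2 • (1 : Matrix κ κ ℝ))).PosSemidef)
    {z : ι → ℝ} (hz : z ⬝ᵥ P *ᵥ z ≤ 1) (k : κ) : |(L *ᵥ z) k| ≤ ℓ := by
  set s := (L *ᵥ z) k
  -- the form of the block matrix at `(z, t • eₖ)` is a nonnegative quadratic in `t`
  have hquad : ∀ t : ℝ, 0 ≤ ℓ ^ 2 * (t * t) + 2 * s * t + z ⬝ᵥ P *ᵥ z := by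
    intro t
    have := h.dotProduct_mulVec_nonneg (Sum.elim z (Pi.single k t))
    simp only [star_trivial, fromBlocks_mulVec, Sum.elim_comp_inl, Sum.elim_comp_inr,
      sumElim_dotProduct_sumElim, dotProduct_add, dotProduct_mulVec z Lᵀ, vecMul_transpose,
      dotProduct_single, single_dotProduct, smul_mulVec, one_mulVec, dotProduct_smul,
      Pi.single_eq_same, smul_eq_mul] at this
    linarith
  have hdisc := discrim_le_zero hquad
  rw [discrim] at hdisc
  refine abs_le_of_sq_le_sq ?_ hℓ
  nlinarith [sq_nonneg ℓ]

noncomputable def deadzone {m : ℕ} (ℓ : ℝ) (v : Fin m → ℝ) : Fin m → ℝ := satv ℓ v - v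

theorem deadzone_mul_add_nonpos {m : ℕ} {ℓ : ℝ} {v w : Fin m → ℝ} {k : Fin m}
    (h : |v k - w k| ≤ ℓ) : deadzone ℓ v k * (w k + deadzone ℓ v k) ≤ 0 := by
  simp only [deadzone, satv, Pi.sub_apply]
  obtain ⟨h₁, h₂⟩ := abs_le.1 h
  split_ifs with hv
  · simp
  · rcases lt_or_gt_of_ne (show v k ≠ 0 by rintro h0; rw [h0, abs_zero] at hv; linarith)
      with hneg | hpos
    · rw [abs_of_neg hneg, mul_div_assoc, div_neg, div_self hneg.ne, mul_neg_one]
      rw [abs_of_neg hneg] at hv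
      nlinarith
    · rw [abs_of_pos hpos, mul_div_assoc, div_self hpos.ne', mul_one]
      rw [abs_of_pos hpos] at hv
      nlinarith

theorem deadzone_dotProduct_mulVec_add_nonpos {m : ℕ} {ℓ : ℝ} {v w : Fin m → ℝ}
    {D : Matrix (Fin m) (Fin m) ℝ} (hD : D.IsDiag) (hD₀ : ∀ i, 0 ≤ D i i)
    (h : ∀ k, |v k - w k| ≤ ℓ) : deadzone ℓ v ⬝ᵥ D *ᵥ (w + deadzone ℓ v) ≤ 0 := by
  rw [← hD.diagonal_diag]
  refine Finset.sum_nonpos fun k _ => ?_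
  rw [mulVec_diagonal, Pi.add_apply, diag_apply, mul_left_comm]
  exact mul_nonpos_of_nonneg_of_nonpos (hD₀ k) (deadzone_mul_add_nonpos (h k))

theorem sumElim_dotProduct_mulVec_M1mat {n m : ℕ} (A : Matrix (Fin n) (Fin n) ℝ)
    (B : Matrix (Fin n) (Fin m) ℝ) (K C : Matrix (Fin m) (Fin n) ℝ) {P : Matrix (Fin n) (Fin n) ℝ}
    (hP : P.IsSymm) (D : Matrix (Fin m) (Fin m) ℝ) (z : Fin n → ℝ) (φ : Fin m → ℝ) :
    Sum.elim z φ ⬝ᵥ M1mat A B K C P D *ᵥ Sum.elim z φ =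
      2 * (z ⬝ᵥ P *ᵥ ((A + B * K) *ᵥ z + B *ᵥ φ)) - 2 * (φ ⬝ᵥ D *ᵥ (C *ᵥ z + φ)) := by
  have hPcomm : ∀ u v, u ⬝ᵥ P *ᵥ v = v ⬝ᵥ P *ᵥ u := by
    intro u v
    rw [dotProduct_mulVec, ← mulVec_transpose, hP.eq, dotProduct_comm]
  have htr : ∀ {a b : ℕ} (M : Matrix (Fin a) (Fin b) ℝ) v w, v ⬝ᵥ Mᵀ *ᵥ w = M *ᵥ v ⬝ᵥ w := by
    intro a b M v w
    rw [dotProduct_mulVec, vecMul_transpose]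
  rw [M1mat, fromBlocks_mulVec, Sum.elim_comp_inl, Sum.elim_comp_inr, sumElim_dotProduct_sumElim]
  simp only [add_mulVec, sub_mulVec, ← mulVec_mulVec, dotProduct_add, dotProduct_sub, htr,
    smul_mulVec, dotProduct_smul, mulVec_add, smul_eq_mul]
  rw [hPcomm (_ + _) z, hPcomm (B *ᵥ φ) z, dotProduct_comm (D *ᵥ _) φ, mulVec_add, dotProduct_add]
  ring

theorem stmt6_general (n m : ℕ)
    (A : Matrix (Fin n) (Fin n) ℝ) (B : Matrix (Fin n) (Fin m) ℝ)
    (K C : Matrix (Fin m) (Fin n) ℝ) (ℓ : ℝ) (hℓ : 0 < ℓ)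
    (P : Matrix (Fin n) (Fin n) ℝ)
    (D : Matrix (Fin m) (Fin m) ℝ) (hDdiag : D.IsDiag) (hDpos : ∀ i, 0 < D i i)
    (hM1 : (-(M1mat A B K C P D)).PosDef) (hM2 : (M2mat K C P ℓ).PosSemidef) :
    ∃ α : ℝ, 0 < α ∧ ∀ z : Fin n → ℝ, z ⬝ᵥ P.mulVec z ≤ 1 →
      2 * (z ⬝ᵥ P.mulVec (A.mulVec z + B.mulVec (satv ℓ (K.mulVec z)))) ≤
        -α * (∑ i, (z i) ^ 2) := by
  have hP : P.IsSymm := by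
    simpa [IsSymm, conjTranspose_eq_transpose_of_trivial] using
      (isHermitian_fromBlocks_iff.1 hM2.isHermitian).1
  obtain ⟨ε, hε, hM1ε⟩ := hM1.exists_pos_mul_dotProduct_self_le
  refine ⟨ε, hε, fun z hz => ?_⟩
  set φ := deadzone ℓ (K *ᵥ z)
  have hsector : φ ⬝ᵥ D *ᵥ (C *ᵥ z + φ) ≤ 0 :=
    deadzone_dotProduct_mulVec_add_nonpos hDdiag (fun i => (hDpos i).le) fun k => by
      simpa [sub_mulVec] using abs_mulVec_le_of_posSemidef_fromBlocks hℓ.le hM2 hz k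
  have hsat : (A + B * K) *ᵥ z + B *ᵥ φ = A *ᵥ z + B *ᵥ satv ℓ (K *ᵥ z) := by
    simp only [φ, deadzone, add_mulVec, ← mulVec_mulVec, mulVec_sub]
    abel
  have hz2 : z ⬝ᵥ z = ∑ i, z i ^ 2 := by simp only [dotProduct, sq]
  have hφ2 : 0 ≤ φ ⬝ᵥ φ := Finset.sum_nonneg fun i _ => mul_self_nonneg (φ i)
  have hquad := hM1ε (Sum.elim z φ)
  rw [neg_mulVec, dotProduct_neg, sumElim_dotProduct_mulVec_M1mat A B K C hP, hsat,
    sumElim_dotProduct_sumElim, hz2] at hquad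
  nlinarith [mul_nonneg hε.le hφ2]

theorem stmt6 (n m : ℕ) (hn : 0 < n) (hm : 0 < m)
    (A : Matrix (Fin n) (Fin n) ℝ) (B : Matrix (Fin n) (Fin m) ℝ)
    (K C : Matrix (Fin m) (Fin n) ℝ) (ℓ : ℝ) (hℓ : 0 < ℓ)
    (P : Matrix (Fin n) (Fin n) ℝ) (hP : P.PosDef)
    (D : Matrix (Fin m) (Fin m) ℝ) (hDdiag : D.IsDiag) (hDpos : ∀ i, 0 < D i i)
    (hM1 : (-(M1mat A B K C P D)).PosDef) (hM2 : (M2mat K C P ℓ).PosSemidef) :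
    ∃ α : ℝ, 0 < α ∧ ∀ z : Fin n → ℝ, z ⬝ᵥ P.mulVec z ≤ 1 →
      2 * (z ⬝ᵥ P.mulVec (A.mulVec z + B.mulVec (satv ℓ (K.mulVec z)))) ≤
        -α * (∑ i, (z i) ^ 2) :=
  stmt6_general n m A B K C ℓ hℓ P D hDdiag hDpos hM1 hM2
end

section
/- Let n, m ∈ ℕ*, A ∈ ℝ^{n×n}, B ∈ ℝ^{n×m}, K ∈ ℝ^{m×n}, ℓ > 0, and suppose there exist a symmetric positive definite matrix P ∈ ℝ^{n×n} and a diagonal matrix D ∈ ℝ^{m×m} with positive diagonal entries such that M1 < 0 holds with C := K, i.e. the matrix [[(A+BK)ᵀP + P(A+BK), PB − (DK)ᵀ],[BᵀP − DK, −2D]] is negative definite. Then there exist M ≥ 1 and a > 0 such that every solution z : [0,∞) → ℝⁿ of the saturated closed-loop system ż = Az + B·sat_ℓ(Kz) satisfies |z(t)| ≤ M·e^{−a t}·|z(0)| for all t ≥ 0 (global exponential stability), where |·| is the Euclidean norm. -/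
open Matrix

/-- Euclidean norm on `ℝⁿ`. -/
noncomputable def enorm' {n : ℕ} (z : Fin n → ℝ) : ℝ :=
  Real.sqrt (∑ i, (z i) ^ 2)

/-!
`V z = zᵀ P z` is a Lyapunov function. Writing the closed loop as `ż = (A + BK) z + B φ` with
`φ = sat_ℓ (K z) - K z`, one gets `V̇ = ξᵀ M1 ξ + 2 φᵀ D sat_ℓ (K z)` for `ξ = (z, φ)`. Each
component of `φ` has the sign opposite to that of `sat_ℓ (K z)` (a sector condition), so for
diagonal `D ≥ 0` the second term is nonpositive, and `M1 < 0` gives `V̇ ≤ -c |z|² ≤ -a V`.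
Grönwall's inequality and the equivalence of `V` with `|z|²` give decay at rate `a / 2`.
-/

section Homogeneous

variable {E : Type*} [NormedAddCommGroup E] [NormedSpace ℝ E] {f : E → ℝ}

lemma le_of_le_on_unitSphere {g : E → ℝ}
    (hf : ∀ (r : ℝ) x, f (r • x) = r ^ 2 * f x) (hg : ∀ (r : ℝ) x, g (r • x) = r ^ 2 * g x)
    (h : ∀ x ∈ Metric.sphere (0 : E) 1, f x ≤ g x) (x : E) : f x ≤ g x := by
  rcases eq_or_ne x 0 with rfl | hx
  · rw [show f 0 = 0 by simpa using hf 0 0, show g 0 = 0 by simpa using hg 0 0]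
  have hx' : ‖x‖ ≠ 0 := norm_ne_zero_iff.mpr hx
  have hu : ‖x‖⁻¹ • x ∈ Metric.sphere (0 : E) 1 := by simp [norm_smul, hx']
  have hxu : x = ‖x‖ • ‖x‖⁻¹ • x := by rw [smul_smul, mul_inv_cancel₀ hx', one_smul]
  calc f x = ‖x‖ ^ 2 * f (‖x‖⁻¹ • x) := by rw [← hf, ← hxu]
    _ ≤ ‖x‖ ^ 2 * g (‖x‖⁻¹ • x) := by gcongr; exact h _ hu
    _ = g x := by rw [← hg, ← hxu]

lemma mul_norm_smul_sq (c r : ℝ) (x : E) : c * ‖r • x‖ ^ 2 = r ^ 2 * (c * ‖x‖ ^ 2) := by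
  rw [norm_smul, Real.norm_eq_abs, mul_pow, sq_abs]
  ring

variable [ProperSpace E]

lemma exists_pos_mul_sq_norm_le_of_homogeneous (hcont : Continuous f)
    (hf : ∀ (r : ℝ) x, f (r • x) = r ^ 2 * f x) (hpos : ∀ x ≠ 0, 0 < f x) :
    ∃ c > 0, ∀ x, c * ‖x‖ ^ 2 ≤ f x := by
  obtain ⟨c, hc, hcf⟩ := (isCompact_sphere (0 : E) 1).exists_forall_le' hcont.continuousOn
    fun x hx => hpos x (by rintro rfl; simp at hx)
  refine ⟨c, hc, le_of_le_on_unitSphere (mul_norm_smul_sq c) hf fun x hx => ?_⟩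
  simpa [mem_sphere_zero_iff_norm.mp hx] using hcf x hx

lemma exists_le_mul_sq_norm_of_homogeneous (hcont : Continuous f)
    (hf : ∀ (r : ℝ) x, f (r • x) = r ^ 2 * f x) :
    ∃ C > 0, ∀ x, f x ≤ C * ‖x‖ ^ 2 := by
  obtain ⟨C, hC⟩ := (isCompact_sphere (0 : E) 1).exists_bound_of_continuousOn hcont.continuousOn
  refine ⟨max C 1, by positivity, le_of_le_on_unitSphere hf (mul_norm_smul_sq _) fun x hx => ?_⟩
  rw [mem_sphere_zero_iff_norm.mp hx, one_pow, mul_one]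
  exact (Real.le_norm_self _).trans ((hC x hx).trans (le_max_left _ _))

end Homogeneous

section QuadraticForm

variable {ι : Type*} [Fintype ι]

lemma EuclideanSpace.norm_toLp_sq (x : ι → ℝ) : ‖WithLp.toLp 2 x‖ ^ 2 = x ⬝ᵥ x := by
  rw [EuclideanSpace.real_norm_sq_eq]
  simp [dotProduct, sq]

lemma Matrix.smul_dotProduct_mulVec_smul (Q : Matrix ι ι ℝ) (r : ℝ) (x : ι → ℝ) :
    (r • x) ⬝ᵥ Q *ᵥ (r • x) = r ^ 2 * (x ⬝ᵥ Q *ᵥ x) := by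
  rw [mulVec_smul, smul_dotProduct, dotProduct_smul, smul_smul, smul_eq_mul, sq]

lemma Matrix.continuous_dotProduct_mulVec (Q : Matrix ι ι ℝ) :
    Continuous fun x : EuclideanSpace ℝ ι => x.ofLp ⬝ᵥ Q *ᵥ x.ofLp := by
  have h := PiLp.continuous_ofLp 2 fun _ : ι => ℝ
  exact h.dotProduct (continuous_const.matrix_mulVec h)

lemma Matrix.PosDef.exists_pos_mul_dotProduct_self_le_s8 {Q : Matrix ι ι ℝ} (hQ : Q.PosDef) :
    ∃ c > 0, ∀ x : ι → ℝ, c * (x ⬝ᵥ x) ≤ x ⬝ᵥ Q *ᵥ x := by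
  obtain ⟨c, hc, hcQ⟩ := exists_pos_mul_sq_norm_le_of_homogeneous
    (Q.continuous_dotProduct_mulVec) (fun r x => Q.smul_dotProduct_mulVec_smul r x.ofLp)
    fun x hx => by simpa using hQ.dotProduct_mulVec_pos (x := x.ofLp) (by simpa using hx)
  exact ⟨c, hc, fun x => by simpa [EuclideanSpace.norm_toLp_sq] using hcQ (WithLp.toLp 2 x)⟩

lemma Matrix.exists_dotProduct_mulVec_le_mul_dotProduct_self (Q : Matrix ι ι ℝ) :
    ∃ C > 0, ∀ x : ι → ℝ, x ⬝ᵥ Q *ᵥ x ≤ C * (x ⬝ᵥ x) := by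
  obtain ⟨C, hC, hCQ⟩ := exists_le_mul_sq_norm_of_homogeneous
    (Q.continuous_dotProduct_mulVec) (fun r x => Q.smul_dotProduct_mulVec_smul r x.ofLp)
  exact ⟨C, hC, fun x => by simpa [EuclideanSpace.norm_toLp_sq] using hCQ (WithLp.toLp 2 x)⟩

end QuadraticForm

section Sector

variable {m : ℕ} {ℓ : ℝ}

lemma satv_sub_mul_satv_nonpos (hℓ : 0 ≤ ℓ) (v : Fin m → ℝ) (k : Fin m) :
    (satv ℓ v k - v k) * satv ℓ v k ≤ 0 := by
  unfold satv
  split_ifs with h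
  · simp
  · have hv : 0 < |v k| := by linarith
    have h_eq : (ℓ * v k / |v k| - v k) * (ℓ * v k / |v k|) = ℓ * (ℓ - |v k|) := by
      field_simp
      rw [sq_abs]
    rw [h_eq]
    exact mul_nonpos_of_nonneg_of_nonpos hℓ (by linarith)

lemma satv_sub_dotProduct_mulVec_satv_nonpos (hℓ : 0 ≤ ℓ) {D : Matrix (Fin m) (Fin m) ℝ}
    (hD : D.IsDiag) (hD_nonneg : ∀ i, 0 ≤ D i i) (v : Fin m → ℝ) :
    (satv ℓ v - v) ⬝ᵥ D *ᵥ satv ℓ v ≤ 0 := by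
  rw [← hD.diagonal_diag]
  refine Finset.sum_nonpos fun k _ => ?_
  rw [Pi.sub_apply, mulVec_diagonal, diag_apply, mul_left_comm]
  exact mul_nonpos_of_nonneg_of_nonpos (hD_nonneg k) (satv_sub_mul_satv_nonpos hℓ v k)

end Sector

section Lyapunov

variable {ι κ : Type*} [Fintype ι] [Fintype κ]

lemma HasDerivAt.dotProduct {u v : ℝ → ι → ℝ} {u' v' : ι → ℝ} {t : ℝ}
    (hu : HasDerivAt u u' t) (hv : HasDerivAt v v' t) :
    HasDerivAt (fun s => u s ⬝ᵥ v s) (u' ⬝ᵥ v t + u t ⬝ᵥ v') t := by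
  unfold _root_.dotProduct
  rw [← Finset.sum_add_distrib]
  exact HasDerivAt.fun_sum fun i (_ : i ∈ Finset.univ) =>
    (hasDerivAt_pi.1 hu i).fun_mul (hasDerivAt_pi.1 hv i)

lemma HasDerivAt.dotProduct_mulVec {z : ℝ → ι → ℝ} {z' : ι → ℝ} {t : ℝ}
    (hz : HasDerivAt z z' t) (Q : Matrix ι ι ℝ) :
    HasDerivAt (fun s => z s ⬝ᵥ Q *ᵥ z s) (z' ⬝ᵥ Q *ᵥ z t + z t ⬝ᵥ Q *ᵥ z') t :=
  hz.dotProduct (Q.mulVecLin.toContinuousLinearMap.hasFDerivAt.comp_hasDerivAt t hz)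

/-- The matrix `M1` of the paper with `C := K`. -/
def sectorLMI (A : Matrix ι ι ℝ) (B : Matrix ι κ ℝ) (K : Matrix κ ι ℝ) (P : Matrix ι ι ℝ)
    (D : Matrix κ κ ℝ) : Matrix (ι ⊕ κ) (ι ⊕ κ) ℝ :=
  fromBlocks ((A + B * K)ᵀ * P + P * (A + B * K)) (P * B - (D * K)ᵀ) (Bᵀ * P - D * K) ((-2 : ℝ) • D)

lemma sumElim_dotProduct_sectorLMI_mulVec (A : Matrix ι ι ℝ) (B : Matrix ι κ ℝ)
    (K : Matrix κ ι ℝ) (P : Matrix ι ι ℝ) (D : Matrix κ κ ℝ) (z : ι → ℝ) (φ : κ → ℝ) :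
    Sum.elim z φ ⬝ᵥ sectorLMI A B K P D *ᵥ Sum.elim z φ =
      ((A + B * K) *ᵥ z + B *ᵥ φ) ⬝ᵥ P *ᵥ z + z ⬝ᵥ P *ᵥ ((A + B * K) *ᵥ z + B *ᵥ φ)
        - 2 * (φ ⬝ᵥ D *ᵥ (K *ᵥ z + φ)) := by
  have hc : (D *ᵥ (K *ᵥ z)) ⬝ᵥ φ = φ ⬝ᵥ (D *ᵥ (K *ᵥ z)) := dotProduct_comm _ _
  simp only [sectorLMI, fromBlocks_mulVec, sumElim_dotProduct_sumElim,
    Sum.elim_comp_inl, Sum.elim_comp_inr, transpose_add, transpose_mul,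
    add_mulVec, sub_mulVec, mulVec_add, ← mulVec_mulVec,
    add_vecMul, add_dotProduct, dotProduct_add, dotProduct_sub, smul_mulVec, dotProduct_smul,
    smul_eq_mul, dotProduct_mulVec, vecMul_transpose, hc]
  ring

end Lyapunov

lemma closedLoop_lyapunov_derivative_le {n m : ℕ} {A : Matrix (Fin n) (Fin n) ℝ}
    {B : Matrix (Fin n) (Fin m) ℝ} {K : Matrix (Fin m) (Fin n) ℝ} {P : Matrix (Fin n) (Fin n) ℝ}
    {D : Matrix (Fin m) (Fin m) ℝ} {ℓ c : ℝ} (hℓ : 0 ≤ ℓ) (hD : D.IsDiag)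
    (hD_nonneg : ∀ i, 0 ≤ D i i) (hc : 0 ≤ c)
    (hM : ∀ ξ, c * (ξ ⬝ᵥ ξ) ≤ ξ ⬝ᵥ (-sectorLMI A B K P D) *ᵥ ξ) (z : Fin n → ℝ) :
    (A *ᵥ z + B *ᵥ satv ℓ (K *ᵥ z)) ⬝ᵥ P *ᵥ z + z ⬝ᵥ P *ᵥ (A *ᵥ z + B *ᵥ satv ℓ (K *ᵥ z))
      ≤ -c * (z ⬝ᵥ z) := by
  set φ := satv ℓ (K *ᵥ z) - K *ᵥ z
  have hw : A *ᵥ z + B *ᵥ satv ℓ (K *ᵥ z) = (A + B * K) *ᵥ z + B *ᵥ φ := by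
    simp only [φ, add_mulVec, mulVec_sub, ← mulVec_mulVec]
    abel
  have hξ := hM (Sum.elim z φ)
  rw [neg_mulVec, dotProduct_neg, sumElim_dotProduct_sectorLMI_mulVec, add_sub_cancel,
    sumElim_dotProduct_sumElim] at hξ
  have hsec := satv_sub_dotProduct_mulVec_satv_nonpos hℓ hD hD_nonneg (K *ᵥ z)
  have hφ : 0 ≤ φ ⬝ᵥ φ := by simpa using dotProduct_self_star_nonneg φ
  rw [hw]
  nlinarith [mul_nonneg hc hφ]

lemma le_mul_exp_of_hasDerivAt_le {V V' : ℝ → ℝ} {a t : ℝ}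
    (hV : ∀ s, 0 ≤ s → HasDerivAt V (V' s) s) (hle : ∀ s, 0 ≤ s → V' s ≤ -a * V s)
    (ht : 0 ≤ t) : V t ≤ V 0 * Real.exp (-a * t) := by
  simpa [gronwallBound_ε0] using
    le_gronwallBound_of_liminf_deriv_right_le (δ := V 0) (K := -a) (ε := 0)
    (fun s hs => (hV s hs.1).continuousAt.continuousWithinAt)
    (fun s hs r hr => (hV s hs.1).hasDerivWithinAt.liminf_right_slope_le hr)
    le_rfl (fun s hs => by simpa using hle s hs.1) t ⟨ht, le_rfl⟩

lemma enorm'_eq_sqrt_dotProduct {n : ℕ} (z : Fin n → ℝ) : enorm' z = √(z ⬝ᵥ z) := by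
  simp [enorm', dotProduct, sq]

lemma enorm'_le_of_quadratic_decay {n : ℕ} {P : Matrix (Fin n) (Fin n) ℝ} {cP CP a t : ℝ}
    (hcP : 0 < cP) (hlow : ∀ x, cP * (x ⬝ᵥ x) ≤ x ⬝ᵥ P *ᵥ x)
    (hup : ∀ x, x ⬝ᵥ P *ᵥ x ≤ CP * (x ⬝ᵥ x)) {x y : Fin n → ℝ}
    (h : x ⬝ᵥ P *ᵥ x ≤ y ⬝ᵥ P *ᵥ y * Real.exp (-a * t)) :
    enorm' x ≤ √(CP / cP) * Real.exp (-(a / 2) * t) * enorm' y := by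
  have hxy : x ⬝ᵥ x ≤ CP / cP * Real.exp (-a * t) * (y ⬝ᵥ y) := by
    calc x ⬝ᵥ x ≤ (x ⬝ᵥ P *ᵥ x) / cP := by rw [le_div_iff₀ hcP]; linarith [hlow x]
      _ ≤ CP * (y ⬝ᵥ y) * Real.exp (-a * t) / cP := by
        gcongr
        exact h.trans (by gcongr; exact hup y)
      _ = CP / cP * Real.exp (-a * t) * (y ⬝ᵥ y) := by ring
  rw [enorm'_eq_sqrt_dotProduct, enorm'_eq_sqrt_dotProduct, show -(a / 2) * t = -a * t / 2 by ring,
    Real.exp_half, ← Real.sqrt_mul' _ (Real.exp_pos _).le,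
    ← Real.sqrt_mul' _ (by simpa using dotProduct_self_star_nonneg y)]
  exact Real.sqrt_le_sqrt hxy

theorem stmt8_general (n m : ℕ)
    (A : Matrix (Fin n) (Fin n) ℝ) (B : Matrix (Fin n) (Fin m) ℝ)
    (K : Matrix (Fin m) (Fin n) ℝ) (ℓ : ℝ) (hℓ : 0 < ℓ)
    (P : Matrix (Fin n) (Fin n) ℝ) (hP : P.PosDef)
    (D : Matrix (Fin m) (Fin m) ℝ) (hDdiag : D.IsDiag) (hDpos : ∀ i, 0 < D i i)
    (hM1 : (-(Matrix.fromBlocks ((A + B * K)ᵀ * P + P * (A + B * K))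
        (P * B - (D * K)ᵀ) (Bᵀ * P - D * K) ((-2 : ℝ) • D))).PosDef) :
    ∃ (M a : ℝ), 1 ≤ M ∧ 0 < a ∧
      ∀ z : ℝ → (Fin n → ℝ),
        (∀ t : ℝ, 0 ≤ t →
          HasDerivAt z (A.mulVec (z t) + B.mulVec (satv ℓ (K.mulVec (z t)))) t) →
        ∀ t : ℝ, 0 ≤ t →
          enorm' (z t) ≤ M * Real.exp (-a * t) * enorm' (z 0) := by
  obtain ⟨cP, hcP, hP_low⟩ := hP.exists_pos_mul_dotProduct_self_le_s8
  obtain ⟨CP, hCP, hP_up⟩ := P.exists_dotProduct_mulVec_le_mul_dotProduct_self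
  obtain ⟨c, hc, hM⟩ := hM1.exists_pos_mul_dotProduct_self_le_s8
  refine ⟨max 1 √(CP / cP), c / CP / 2, le_max_left _ _, by positivity, fun z hz t ht => ?_⟩
  have hV' : ∀ s, 0 ≤ s → (A *ᵥ z s + B *ᵥ satv ℓ (K *ᵥ z s)) ⬝ᵥ P *ᵥ z s
      + z s ⬝ᵥ P *ᵥ (A *ᵥ z s + B *ᵥ satv ℓ (K *ᵥ z s)) ≤ -(c / CP) * (z s ⬝ᵥ P *ᵥ z s) :=
    fun s _ => (closedLoop_lyapunov_derivative_le hℓ.le hDdiag (fun i => (hDpos i).le) hc.le hM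
      (z s)).trans <| by
        rw [neg_mul, neg_mul, neg_le_neg_iff, div_mul_eq_mul_div, div_le_iff₀ hCP]
        nlinarith [hP_up (z s)]
  have hdecay := le_mul_exp_of_hasDerivAt_le (fun s hs => (hz s hs).dotProduct_mulVec P) hV' ht
  calc enorm' (z t) ≤ √(CP / cP) * Real.exp (-(c / CP / 2) * t) * enorm' (z 0) :=
        enorm'_le_of_quadratic_decay hcP hP_low hP_up hdecay
    _ ≤ _ := mul_le_mul_of_nonneg_right (mul_le_mul_of_nonneg_right (le_max_right _ _)
        (Real.exp_pos _).le) (Real.sqrt_nonneg _)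

theorem stmt8 (n m : ℕ) (hn : 0 < n) (hm : 0 < m)
    (A : Matrix (Fin n) (Fin n) ℝ) (B : Matrix (Fin n) (Fin m) ℝ)
    (K : Matrix (Fin m) (Fin n) ℝ) (ℓ : ℝ) (hℓ : 0 < ℓ)
    (P : Matrix (Fin n) (Fin n) ℝ) (hP : P.PosDef)
    (D : Matrix (Fin m) (Fin m) ℝ) (hDdiag : D.IsDiag) (hDpos : ∀ i, 0 < D i i)
    (hM1 : (-(Matrix.fromBlocks ((A + B * K)ᵀ * P + P * (A + B * K))
        (P * B - (D * K)ᵀ) (Bᵀ * P - D * K) ((-2 : ℝ) • D))).PosDef) :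
    ∃ (M a : ℝ), 1 ≤ M ∧ 0 < a ∧
      ∀ z : ℝ → (Fin n → ℝ),
        (∀ t : ℝ, 0 ≤ t →
          HasDerivAt z (A.mulVec (z t) + B.mulVec (satv ℓ (K.mulVec (z t)))) t) →
        ∀ t : ℝ, 0 ≤ t →
          enorm' (z t) ≤ M * Real.exp (-a * t) * enorm' (z 0) :=
  stmt8_general n m A B K ℓ hℓ P hP D hDdiag hDpos hM1
end
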